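/- (Dimension theorem) Let U and W be two finite-dimensional hypersubspaces of a strongly left distributive hypervector space (V, #, ∗) over a hyperfield (F, ⊕, ·). Then U # W = ⋃ { α # β : α ∈ U, β ∈ W } is a finite-dimensional hypersubspace of V, and dim(U # W) = dim(U) + dim(W) − dim(U ∩ W). -/

import Mathlib

universe u v

/-- A hyperfield: `(F, ⊕, ·)` where `(F, ⊕)` is a commutative hypergroup with zero
element `zero` (each `a` having a unique additive inverse `neg a`, and satisfying
reversibility), and `·` is an associative commutative multiplication distributing
over `⊕` from both sides, with `a·0 = 0·a = 0`, an identity `one` and multiplicative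
inverses for nonzero elements. -/
structure Hyperfield (F : Type u) where
  add : F → F → Set F
  add_nonempty : ∀ a b, (add a b).Nonempty
  add_comm : ∀ a b, add a b = add b a
  add_assoc : ∀ a b c, (⋃ t ∈ add b c, add a t) = ⋃ t ∈ add a b, add t c
  zero : F
  neg : F → F
  neg_spec : ∀ a, zero ∈ add a (neg a) ∧ zero ∈ add (neg a) a
  neg_unique : ∀ a b, zero ∈ add a b → zero ∈ add b a → b = neg a
  reversible : ∀ a b c, a ∈ add b c → b ∈ add a (neg c)
  mul : F → F → F
  mul_assoc : ∀ a b c, mul (mul a b) c = mul a (mul b c)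
  left_distrib : ∀ a b c, (mul a) '' (add b c) = add (mul a b) (mul a c)
  right_distrib : ∀ a b c, (fun t => mul t a) '' (add b c) = add (mul b a) (mul c a)
  mul_zero : ∀ a, mul a zero = zero
  zero_mul : ∀ a, mul zero a = zero
  one : F
  mul_one : ∀ a, mul a one = a
  one_ne_zero : one ≠ zero
  mul_comm : ∀ a b, mul a b = mul b a
  exists_inv : ∀ a, a ≠ zero → ∃ b, mul a b = one

/-- A hypervector space `(V, #, ∗)` over a hyperfield `K` on `F`:
`(V, #)` is a commutative hypergroup with zero vector `vzero`, and
`∗ : F × V → P*(V)` satisfies (i) `a ∗ (α # β) ⊆ a∗α # a∗β`,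
(ii) `(a ⊕ b) ∗ α ⊆ a∗α # b∗α`, (iii) `(a·b) ∗ α = a ∗ (b ∗ α)`,
(iv) `1 ∗ α = {α}` and `0 ∗ α = {θ}`. -/
structure HypervectorSpace (F : Type u) (V : Type v) (K : Hyperfield F) where
  vadd : V → V → Set V
  vadd_nonempty : ∀ x y, (vadd x y).Nonempty
  vadd_comm : ∀ x y, vadd x y = vadd y x
  vadd_assoc : ∀ x y z, (⋃ t ∈ vadd y z, vadd x t) = ⋃ t ∈ vadd x y, vadd t z
  vzero : V
  vneg : V → V
  vneg_spec : ∀ x, vzero ∈ vadd x (vneg x) ∧ vzero ∈ vadd (vneg x) x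
  vneg_unique : ∀ x y, vzero ∈ vadd x y → vzero ∈ vadd y x → y = vneg x
  vreversible : ∀ x y z, x ∈ vadd y z → y ∈ vadd x (vneg z)
  smul : F → V → Set V
  smul_nonempty : ∀ a x, (smul a x).Nonempty
  smul_vadd : ∀ a x y, (⋃ t ∈ vadd x y, smul a t) ⊆ ⋃ u ∈ smul a x, ⋃ w ∈ smul a y, vadd u w
  add_smul : ∀ a b x, (⋃ t ∈ K.add a b, smul t x) ⊆ ⋃ u ∈ smul a x, ⋃ w ∈ smul b x, vadd u w
  mul_smul : ∀ a b x, smul (K.mul a b) x = ⋃ t ∈ smul b x, smul a t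
  one_smul : ∀ x, smul K.one x = {x}
  zero_smul : ∀ x, smul K.zero x = {vzero}

namespace HypervectorSpace

variable {F : Type u} {V : Type v} {K : Hyperfield F}

/-- The hyperoperation `#` extended to subsets: `A # B = ⋃_{a ∈ A, b ∈ B} a # b`. -/
def setVadd (H : HypervectorSpace F V K) (A B : Set V) : Set V :=
  ⋃ a ∈ A, ⋃ b ∈ B, H.vadd a b

/-- A subset `W` of a hypervector space is a hypersubspace if it is closed under `#`
and `∗`, contains the zero vector, and contains additive inverses. -/
def IsHypersubspace (H : HypervectorSpace F V K) (W : Set V) : Prop :=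
  (∀ α ∈ W, ∀ β ∈ W, H.vadd α β ⊆ W) ∧
  (∀ a : F, ∀ α ∈ W, H.smul a α ⊆ W) ∧
  H.vzero ∈ W ∧
  (∀ α ∈ W, H.vneg α ∈ W)

/-- Iterated hyperoperation `A₁ # A₂ # ... # Aₙ` on a list of subsets
(by convention the empty hypersum is `{θ}`). -/
def hsum (H : HypervectorSpace F V K) : List (Set V) → Set V
  | [] => {H.vzero}
  | [A] => A
  | A :: B :: rest => H.setVadd A (HypervectorSpace.hsum H (B :: rest))

/-- The linear combination set `a₁∗α₁ # a₂∗α₂ # ... # aₙ∗αₙ`. -/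
def lincomb (H : HypervectorSpace F V K) {n : ℕ} (a : Fin n → F) (α : Fin n → V) : Set V :=
  H.hsum (List.ofFn fun i => H.smul (a i) (α i))

/-- The hyperlinear span `HL(α₁, ..., αₙ) = ⋃ { a₁∗α₁ # ... # aₙ∗αₙ : a₁, ..., aₙ ∈ F }`. -/
def HL (H : HypervectorSpace F V K) {n : ℕ} (α : Fin n → V) : Set V :=
  ⋃ a : Fin n → F, H.lincomb a α

/-- The family `α₁, ..., αₙ` is linearly dependent if `θ ∈ a₁∗α₁ # ... # aₙ∗αₙ`
for some scalars `a₁, ..., aₙ`, not all zero. -/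
def LinDep (H : HypervectorSpace F V K) {n : ℕ} (α : Fin n → V) : Prop :=
  ∃ a : Fin n → F, (∃ i, a i ≠ K.zero) ∧ H.vzero ∈ H.lincomb a α

/-- Strongly left distributive: equality `(a ⊕ b) ∗ α = a∗α # b∗α`. -/
def StronglyLeftDistrib (H : HypervectorSpace F V K) : Prop :=
  ∀ (a b : F) (x : V),
    (⋃ t ∈ K.add a b, H.smul t x) = ⋃ u ∈ H.smul a x, ⋃ w ∈ H.smul b x, H.vadd u w

/-- The set of all finite linear combinations of elements of `S`. -/
def HLSet (H : HypervectorSpace F V K) (S : Set V) : Set V :=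
  ⋃ n : ℕ, ⋃ β : Fin n → V, ⋃ (_ : ∀ i, β i ∈ S), H.HL β

/-- A set `S` is linearly independent if every finite family of distinct elements
of `S` is linearly independent. -/
def LinIndepSet (H : HypervectorSpace F V K) (S : Set V) : Prop :=
  ∀ (n : ℕ) (β : Fin n → V), Function.Injective β → (∀ i, β i ∈ S) → ¬ H.LinDep β

/-- `S` is a basis of the hypersubspace `U`: `S ⊆ U`, `S` is linearly independent,
and every element of `U` is a finite linear combination of elements of `S`. -/
def IsBasisOf (H : HypervectorSpace F V K) (S U : Set V) : Prop :=
  S ⊆ U ∧ H.LinIndepSet S ∧ U ⊆ H.HLSet S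

end HypervectorSpace

/-!
Strong left distributivity makes linear combinations behave as in a vector space: two
occurrences of the same vector merge into one (`(a ⊕ b) ∗ x = a∗x # b∗x`), and `−x ∈ (−1)∗x`.
Hence every vector of a span is a combination of distinct vectors, and a relation
`θ ∈ a∗t # …` with `a ≠ 0` can be solved for `t`. This gives the Steinitz exchange lemma, so
all finite bases of a hypersubspace have the same size, and every independent subset of a
finitely spanned set extends to a finite basis.

Extend a basis `BI` of `U ∩ W` to bases `B₁` of `U` and `B₂` of `W`. Since
`U # W = HL(U ∪ W)`, the set `B₁ ∪ B₂` spans `U # W`; it is independent because in a relation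
`θ ∈ u # w` with `u` a combination of `B₁` and `w` one of `B₂ \ B₁`, the vector `w = −u` lies
in `U ∩ W`, hence in the span of `BI`, which forces its coefficients to vanish. Finally
`B₁ ∩ B₂ = BI`, so `|B₁ ∪ B₂| + |BI| = |B₁| + |B₂|`.
-/

theorem List.map_ne_of_mem_erase {α β : Type*} [BEq α] [LawfulBEq α] (f : α → β)
    {l : List α} (hnd : (l.map f).Nodup) {p q : α} (hq : q ∈ l) (hp : p ∈ l.erase q) :
    f p ≠ f q := by
  have hperm := (List.perm_cons_erase hq).map f
  rw [List.map_cons] at hperm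
  rintro hpq
  exact (List.nodup_cons.1 (hnd.perm hperm)).1 (hpq ▸ List.mem_map_of_mem hp)

namespace HypervectorSpace

variable {F : Type u} {V : Type v} {K : Hyperfield F} (H : HypervectorSpace F V K)

section Hypergroup

theorem vneg_vneg (x : V) : H.vneg (H.vneg x) = x :=
  (H.vneg_unique (H.vneg x) x (H.vneg_spec x).2 (H.vneg_spec x).1).symm

theorem eq_vneg {x y : V} (h : H.vzero ∈ H.vadd x y) : y = H.vneg x :=
  H.vneg_unique x y h (by rwa [H.vadd_comm] at h)

theorem vzero_vadd (x : V) : H.vadd H.vzero x = {x} := by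
  ext y
  constructor
  · intro hy
    have h := congrArg H.vneg (H.eq_vneg (H.vreversible y H.vzero x hy))
    rw [H.vneg_vneg, H.vneg_vneg] at h
    exact h.symm
  · rintro rfl
    simpa only [H.vneg_vneg] using H.vreversible H.vzero y (H.vneg y) (H.vneg_spec y).1

theorem vadd_vzero (x : V) : H.vadd x H.vzero = {x} := by
  rw [H.vadd_comm, H.vzero_vadd]

theorem smul_vzero (a : F) : H.smul a H.vzero = {H.vzero} := by
  simpa [K.mul_zero, H.zero_smul] using (H.mul_smul a K.zero H.vzero).symm

theorem mem_setVadd {A B : Set V} {x : V} :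
    x ∈ H.setVadd A B ↔ ∃ a ∈ A, ∃ b ∈ B, x ∈ H.vadd a b := by
  simp [setVadd]

theorem vadd_subset_setVadd {A B : Set V} {a b : V} (ha : a ∈ A) (hb : b ∈ B) :
    H.vadd a b ⊆ H.setVadd A B := fun _ hx => H.mem_setVadd.2 ⟨a, ha, b, hb, hx⟩

theorem setVadd_mono {A B A' B' : Set V} (hA : A ⊆ A') (hB : B ⊆ B') :
    H.setVadd A B ⊆ H.setVadd A' B' := by
  intro x hx
  obtain ⟨a, ha, b, hb, hx⟩ := H.mem_setVadd.1 hx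
  exact H.mem_setVadd.2 ⟨a, hA ha, b, hB hb, hx⟩

theorem setVadd_comm (A B : Set V) : H.setVadd A B = H.setVadd B A := by
  ext x
  simp only [mem_setVadd]
  constructor <;> rintro ⟨a, ha, b, hb, hx⟩ <;> exact ⟨b, hb, a, ha, by rwa [H.vadd_comm]⟩

theorem exists_mem_vadd_assoc {a b c x : V} :
    (∃ t ∈ H.vadd a b, x ∈ H.vadd t c) ↔ ∃ t ∈ H.vadd b c, x ∈ H.vadd a t := by
  have h := Set.ext_iff.1 (H.vadd_assoc a b c) x
  simp only [Set.mem_iUnion, exists_prop] at h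
  exact h.symm

theorem setVadd_assoc (A B C : Set V) :
    H.setVadd (H.setVadd A B) C = H.setVadd A (H.setVadd B C) := by
  ext x
  simp only [mem_setVadd]
  constructor
  · rintro ⟨t, ⟨a, ha, b, hb, ht⟩, c, hc, hx⟩
    obtain ⟨s, hs, hxs⟩ := H.exists_mem_vadd_assoc.1 ⟨t, ht, hx⟩
    exact ⟨a, ha, s, ⟨b, hb, c, hc, hs⟩, hxs⟩
  · rintro ⟨a, ha, s, ⟨b, hb, c, hc, hs⟩, hx⟩
    obtain ⟨t, ht, hxt⟩ := H.exists_mem_vadd_assoc.2 ⟨s, hs, hx⟩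
    exact ⟨t, ⟨a, ha, b, hb, ht⟩, c, hc, hxt⟩

theorem setVadd_left_comm (A B C : Set V) :
    H.setVadd A (H.setVadd B C) = H.setVadd B (H.setVadd A C) := by
  rw [← H.setVadd_assoc, H.setVadd_comm A B, H.setVadd_assoc]

theorem setVadd_vzero (A : Set V) : H.setVadd A {H.vzero} = A := by
  ext x
  simp [mem_setVadd, H.vadd_vzero]

theorem vzero_setVadd (A : Set V) : H.setVadd {H.vzero} A = A := by
  rw [H.setVadd_comm, H.setVadd_vzero]

theorem setVadd_biUnion_left {ι : Type*} (s : Set ι) (f : ι → Set V) (B : Set V) :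
    H.setVadd (⋃ i ∈ s, f i) B = ⋃ i ∈ s, H.setVadd (f i) B := by
  ext x
  simp only [mem_setVadd, Set.mem_iUnion, exists_prop]
  constructor
  · rintro ⟨a, ⟨i, hi, ha⟩, b, hb, hx⟩
    exact ⟨i, hi, a, ha, b, hb, hx⟩
  · rintro ⟨i, hi, a, ha, b, hb, hx⟩
    exact ⟨a, ⟨i, hi, ha⟩, b, hb, hx⟩

/-- Strong left distributivity applied to `0 ∈ 1 ⊕ (-1)`. -/
theorem vneg_mem_smul_neg_one (hsld : H.StronglyLeftDistrib) (x : V) :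
    H.vneg x ∈ H.smul (K.neg K.one) x := by
  have hz : H.vzero ∈ ⋃ t ∈ K.add K.one (K.neg K.one), H.smul t x :=
    Set.mem_biUnion (K.neg_spec K.one).1 (by rw [H.zero_smul]; rfl)
  rw [hsld, H.one_smul] at hz
  simp only [Set.mem_iUnion, Set.mem_singleton_iff, exists_prop] at hz
  obtain ⟨_, rfl, w, hw, hxw⟩ := hz
  rwa [← H.eq_vneg hxw]

end Hypergroup

section ListComb

theorem hsum_cons (A : Set V) (l : List (Set V)) :
    H.hsum (A :: l) = H.setVadd A (H.hsum l) := by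
  cases l with
  | nil => rw [hsum, hsum, H.setVadd_vzero]
  | cons B r => rfl

theorem hsum_append (l₁ l₂ : List (Set V)) :
    H.hsum (l₁ ++ l₂) = H.setVadd (H.hsum l₁) (H.hsum l₂) := by
  induction l₁ with
  | nil => rw [List.nil_append, hsum, H.vzero_setVadd]
  | cons A r ih => rw [List.cons_append, H.hsum_cons, ih, H.hsum_cons, H.setVadd_assoc]

theorem hsum_perm {l l' : List (Set V)} (hp : l.Perm l') : H.hsum l = H.hsum l' := by
  induction hp with
  | nil => rfl
  | cons A _ ih => rw [H.hsum_cons, H.hsum_cons, ih]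
  | swap A B r => simp only [H.hsum_cons, H.setVadd_left_comm]
  | trans _ _ ih₁ ih₂ => rw [ih₁, ih₂]

/-- `a₁∗x₁ # ... # aₙ∗xₙ` for a list of pairs `(aᵢ, xᵢ)`: unlike the `Fin n`-indexed
`lincomb`, such lists can be permuted, split and concatenated. -/
def listComb (l : List (F × V)) : Set V := H.hsum (l.map fun p => H.smul p.1 p.2)

theorem listComb_nil : H.listComb ([] : List (F × V)) = {H.vzero} := rfl

theorem listComb_cons (p : F × V) (l : List (F × V)) :
    H.listComb (p :: l) = H.setVadd (H.smul p.1 p.2) (H.listComb l) := by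
  rw [listComb, List.map_cons, H.hsum_cons]
  rfl

theorem listComb_append (l₁ l₂ : List (F × V)) :
    H.listComb (l₁ ++ l₂) = H.setVadd (H.listComb l₁) (H.listComb l₂) := by
  rw [listComb, List.map_append, H.hsum_append]
  rfl

theorem listComb_perm {l l' : List (F × V)} (hp : l.Perm l') : H.listComb l = H.listComb l' :=
  H.hsum_perm (hp.map _)

theorem listComb_eq_vzero {l : List (F × V)} (h : ∀ p ∈ l, p.1 = K.zero) :
    H.listComb l = {H.vzero} := by
  induction l with
  | nil => rfl
  | cons p r ih =>
    rw [H.listComb_cons, h p List.mem_cons_self, H.zero_smul, H.vzero_setVadd,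
      ih fun q hq => h q (List.mem_cons_of_mem p hq)]

theorem smul_subset_listComb_map {l : List (F × V)} {x : V} (hx : x ∈ H.listComb l) (s : F) :
    H.smul s x ⊆ H.listComb (l.map fun p => (K.mul s p.1, p.2)) := by
  induction l generalizing x with
  | nil =>
    rw [listComb_nil, Set.mem_singleton_iff] at hx
    rw [hx, H.smul_vzero]
    rfl
  | cons p r ih =>
    rw [H.listComb_cons] at hx
    obtain ⟨u, hu, w, hw, hx⟩ := H.mem_setVadd.1 hx
    rw [List.map_cons, H.listComb_cons, H.mul_smul]
    intro y hy
    have hy := H.smul_vadd s u w (Set.mem_biUnion hx hy)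
    simp only [Set.mem_iUnion, exists_prop] at hy
    obtain ⟨u', hu', w', hw', hy⟩ := hy
    exact H.mem_setVadd.2 ⟨u', Set.mem_biUnion hu hu', w', ih hw hw', hy⟩

theorem vneg_mem_listComb_map (hsld : H.StronglyLeftDistrib) {l : List (F × V)} {x : V}
    (hx : x ∈ H.listComb l) :
    H.vneg x ∈ H.listComb (l.map fun p => (K.mul (K.neg K.one) p.1, p.2)) :=
  H.smul_subset_listComb_map hx _ (H.vneg_mem_smul_neg_one hsld x)

theorem listComb_subset {U : Set V} (hU : H.IsHypersubspace U) {l : List (F × V)}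
    (h : ∀ p ∈ l, p.2 ∈ U) : H.listComb l ⊆ U := by
  induction l with
  | nil => exact Set.singleton_subset_iff.2 hU.2.2.1
  | cons p r ih =>
    rw [H.listComb_cons]
    intro x hx
    obtain ⟨u, hu, w, hw, hx⟩ := H.mem_setVadd.1 hx
    exact hU.1 u (hU.2.1 p.1 p.2 (h p List.mem_cons_self) hu)
      w (ih (fun q hq => h q (List.mem_cons_of_mem p hq)) hw) hx

theorem listComb_cons_cons_same (hsld : H.StronglyLeftDistrib) (a b : F) (x : V)
    (l : List (F × V)) :
    H.listComb ((a, x) :: (b, x) :: l) = ⋃ t ∈ K.add a b, H.listComb ((t, x) :: l) := by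
  simp only [H.listComb_cons]
  rw [← H.setVadd_assoc, ← H.setVadd_biUnion_left]
  exact congrArg (H.setVadd · _) (hsld a b x).symm

end ListComb

section Span

theorem lincomb_eq_listComb {n : ℕ} (a : Fin n → F) (β : Fin n → V) :
    H.lincomb a β = H.listComb (List.ofFn fun i => (a i, β i)) := by
  rw [lincomb, listComb, List.map_ofFn]
  rfl

theorem listComb_eq_lincomb (l : List (F × V)) :
    H.listComb l = H.lincomb (fun i => (l.get i).1) (fun i => (l.get i).2) := by
  rw [lincomb_eq_listComb]
  congr
  exact (List.ofFn_get l).symm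

theorem mem_HLSet {S : Set V} {x : V} :
    x ∈ H.HLSet S ↔ ∃ l : List (F × V), (∀ p ∈ l, p.2 ∈ S) ∧ x ∈ H.listComb l := by
  simp only [HLSet, HL, Set.mem_iUnion]
  constructor
  · rintro ⟨n, β, hβ, a, hx⟩
    refine ⟨List.ofFn fun i => (a i, β i), ?_, by rwa [← lincomb_eq_listComb]⟩
    simpa [List.mem_ofFn] using hβ
  · rintro ⟨l, hl, hx⟩
    exact ⟨l.length, _, fun i => hl _ (l.get_mem i), _, by rwa [← listComb_eq_lincomb]⟩

theorem subset_HLSet (S : Set V) : S ⊆ H.HLSet S := fun x hx =>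
  H.mem_HLSet.2 ⟨[(K.one, x)], by simpa using hx, by
    rw [H.listComb_cons, H.one_smul, listComb_nil, H.setVadd_vzero]; rfl⟩

theorem HLSet_mono {S T : Set V} (h : S ⊆ T) : H.HLSet S ⊆ H.HLSet T := fun _ hx =>
  let ⟨l, hl, hx⟩ := H.mem_HLSet.1 hx
  H.mem_HLSet.2 ⟨l, fun p hp => h (hl p hp), hx⟩

theorem vadd_subset_HLSet {S : Set V} {x y : V} (hx : x ∈ H.HLSet S) (hy : y ∈ H.HLSet S) :
    H.vadd x y ⊆ H.HLSet S := by
  obtain ⟨l₁, hl₁, hx⟩ := H.mem_HLSet.1 hx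
  obtain ⟨l₂, hl₂, hy⟩ := H.mem_HLSet.1 hy
  intro z hz
  refine H.mem_HLSet.2 ⟨l₁ ++ l₂, List.forall_mem_append.2 ⟨hl₁, hl₂⟩, ?_⟩
  rw [H.listComb_append]
  exact H.vadd_subset_setVadd hx hy hz

theorem smul_subset_HLSet {S : Set V} {x : V} (a : F) (hx : x ∈ H.HLSet S) :
    H.smul a x ⊆ H.HLSet S := by
  obtain ⟨l, hl, hx⟩ := H.mem_HLSet.1 hx
  intro y hy
  refine H.mem_HLSet.2 ⟨_, ?_, H.smul_subset_listComb_map hx a hy⟩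
  exact List.forall_mem_map.2 hl

theorem isHypersubspace_HLSet (hsld : H.StronglyLeftDistrib) (S : Set V) :
    H.IsHypersubspace (H.HLSet S) :=
  ⟨fun _ hx _ hy => H.vadd_subset_HLSet hx hy, fun a _ hx => H.smul_subset_HLSet a hx,
    H.mem_HLSet.2 ⟨[], by simp, rfl⟩,
    fun x hx => H.smul_subset_HLSet _ hx (H.vneg_mem_smul_neg_one hsld x)⟩

theorem HLSet_subset {S U : Set V} (hU : H.IsHypersubspace U) (h : S ⊆ U) :
    H.HLSet S ⊆ U := fun _ hx =>
  let ⟨_, hl, hx⟩ := H.mem_HLSet.1 hx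
  H.listComb_subset hU (fun p hp => h (hl p hp)) hx

end Span

section Independence

theorem exists_nodup_listComb (hsld : H.StronglyLeftDistrib) {S : Set V} {l : List (F × V)}
    (hl : ∀ p ∈ l, p.2 ∈ S) {x : V} (hx : x ∈ H.listComb l) :
    ∃ m : List (F × V), (∀ p ∈ m, p.2 ∈ S) ∧ (m.map Prod.snd).Nodup ∧ x ∈ H.listComb m := by
  classical
  induction l generalizing x with
  | nil => exact ⟨[], hl, List.nodup_nil, hx⟩
  | cons q r ih =>
    obtain ⟨a, y⟩ := q
    rw [List.forall_mem_cons] at hl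
    rw [H.listComb_cons] at hx
    obtain ⟨u, hu, w, hw, hx⟩ := H.mem_setVadd.1 hx
    obtain ⟨m, hmS, hmnd, hwm⟩ := ih hl.2 hw
    have hxm : x ∈ H.listComb ((a, y) :: m) := by
      rw [H.listComb_cons]
      exact H.mem_setVadd.2 ⟨u, hu, w, hwm, hx⟩
    by_cases hdup : y ∈ m.map Prod.snd
    · obtain ⟨⟨b, y'⟩, hp, rfl : y' = y⟩ := List.mem_map.1 hdup
      rw [H.listComb_perm ((List.perm_cons_erase hp).cons _),
        H.listComb_cons_cons_same hsld, Set.mem_iUnion₂] at hxm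
      obtain ⟨t, -, hxt⟩ := hxm
      refine ⟨(t, y') :: m.erase (b, y'), ?_, ?_, hxt⟩
      · exact List.forall_mem_cons.2 ⟨hl.1, fun p hp => hmS p (List.erase_subset hp)⟩
      · rw [List.map_cons, List.nodup_cons]
        refine ⟨fun hmem => ?_, hmnd.sublist (List.erase_sublist.map _)⟩
        obtain ⟨p, hp', hpy⟩ := List.mem_map.1 hmem
        exact List.map_ne_of_mem_erase Prod.snd hmnd hp hp' hpy
    · exact ⟨(a, y) :: m, List.forall_mem_cons.2 ⟨hl.1, hmS⟩,
        List.nodup_cons.2 ⟨hdup, hmnd⟩, hxm⟩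

theorem exists_sublist_ne_zero {l : List (F × V)} {x : V} (hx : x ∈ H.listComb l) :
    ∃ m, m.Sublist l ∧ (∀ p ∈ m, p.1 ≠ K.zero) ∧ x ∈ H.listComb m := by
  induction l generalizing x with
  | nil => exact ⟨[], List.Sublist.refl _, by simp, hx⟩
  | cons q r ih =>
    rw [H.listComb_cons] at hx
    obtain ⟨u, hu, w, hw, hx⟩ := H.mem_setVadd.1 hx
    obtain ⟨m, hmr, hm, hwm⟩ := ih hw
    by_cases hq : q.1 = K.zero
    · rw [hq, H.zero_smul, Set.mem_singleton_iff] at hu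
      rw [hu, H.vzero_vadd, Set.mem_singleton_iff] at hx
      exact ⟨m, hmr.cons q, hm, hx ▸ hwm⟩
    · refine ⟨q :: m, hmr.cons_cons q, List.forall_mem_cons.2 ⟨hq, hm⟩, ?_⟩
      rw [H.listComb_cons]
      exact H.mem_setVadd.2 ⟨u, hu, w, hwm, hx⟩

theorem mem_HLSet_of_vzero_mem_listComb_cons (hsld : H.StronglyLeftDistrib) {S : Set V}
    {a : F} {y : V} {l : List (F × V)} (ha : a ≠ K.zero) (hl : ∀ p ∈ l, p.2 ∈ S)
    (h : H.vzero ∈ H.listComb ((a, y) :: l)) : y ∈ H.HLSet S := by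
  have hS := H.isHypersubspace_HLSet hsld S
  rw [H.listComb_cons] at h
  obtain ⟨u, hu, r, hr, hz⟩ := H.mem_setVadd.1 h
  have huS : u ∈ H.HLSet S := by
    rw [← H.vneg_vneg u, ← H.eq_vneg hz]
    exact hS.2.2.2 r (H.mem_HLSet.2 ⟨l, hl, hr⟩)
  obtain ⟨b, hb⟩ := K.exists_inv a ha
  have hbu : H.smul b u ⊆ {y} := by
    rw [← H.one_smul y, ← hb, K.mul_comm, H.mul_smul]
    exact Set.subset_biUnion_of_mem hu
  obtain ⟨z, hz⟩ := H.smul_nonempty b u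
  rw [← Set.mem_singleton_iff.1 (hbu hz)]
  exact hS.2.1 b u huS hz

theorem linIndepSet_iff {S : Set V} :
    H.LinIndepSet S ↔ ∀ l : List (F × V), (∀ p ∈ l, p.2 ∈ S) → (l.map Prod.snd).Nodup →
      H.vzero ∈ H.listComb l → ∀ p ∈ l, p.1 = K.zero := by
  constructor
  · intro h l hl hnd hz p hp
    have hsnd : l.map Prod.snd = List.ofFn fun i => (l.get i).2 := by
      conv_lhs => rw [← List.ofFn_get l]
      rw [List.map_ofFn]
      rfl
    have hinj : Function.Injective fun i => (l.get i).2 := by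
      rw [← List.nodup_ofFn, ← hsnd]
      exact hnd
    by_contra hp0
    obtain ⟨i, rfl⟩ := List.mem_iff_get.1 hp
    exact h _ _ hinj (fun i => hl _ (l.get_mem i))
      ⟨_, ⟨i, hp0⟩, by rwa [← listComb_eq_lincomb]⟩
  · rintro h n β hinj hβ ⟨a, ⟨i, hi⟩, hz⟩
    rw [lincomb_eq_listComb] at hz
    refine hi (h _ ?_ ?_ hz (a i, β i) (List.mem_ofFn.2 ⟨i, rfl⟩))
    · simpa [List.mem_ofFn] using hβ
    · rw [List.map_ofFn]
      exact List.nodup_ofFn.2 hinj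

theorem linIndepSet_empty : H.LinIndepSet ∅ :=
  fun _ _ _ hβ ⟨_, ⟨i, _⟩, _⟩ => hβ i

theorem notMem_HLSet_diff_singleton (hsld : H.StronglyLeftDistrib) {S : Set V} {x : V}
    (hS : H.LinIndepSet S) (hxS : x ∈ S) : x ∉ H.HLSet (S \ {x}) := by
  intro hx
  obtain ⟨l, hl, hxl⟩ := H.mem_HLSet.1 hx
  obtain ⟨m, hm, hmnd, hxm⟩ := H.exists_nodup_listComb hsld hl hxl
  have hz : H.vzero ∈ H.listComb ((K.one, x) ::
      m.map fun p => (K.mul (K.neg K.one) p.1, p.2)) := by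
    rw [H.listComb_cons, H.one_smul]
    exact H.mem_setVadd.2 ⟨x, rfl, _, H.vneg_mem_listComb_map hsld hxm, (H.vneg_spec x).1⟩
  refine K.one_ne_zero (H.linIndepSet_iff.1 hS _ ?_ ?_ hz _ List.mem_cons_self)
  · exact List.forall_mem_cons.2 ⟨hxS, List.forall_mem_map.2 fun p hp => (hm p hp).1⟩
  · simp only [List.map_cons, List.map_map, Function.comp_def, List.nodup_cons]
    refine ⟨fun hmem => ?_, hmnd⟩
    obtain ⟨p, hp, hpx⟩ := List.mem_map.1 hmem
    exact (hm p hp).2 hpx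

theorem linIndepSet_insert (hsld : H.StronglyLeftDistrib) {S : Set V} {x : V}
    (hS : H.LinIndepSet S) (hx : x ∉ H.HLSet S) : H.LinIndepSet (insert x S) := by
  classical
  rw [linIndepSet_iff] at hS ⊢
  intro l hl hnd hz
  by_cases hxl : x ∈ l.map Prod.snd
  · obtain ⟨⟨a, x'⟩, hq, rfl : x' = x⟩ := List.mem_map.1 hxl
    have hperm := List.perm_cons_erase hq
    have hrest : ∀ p ∈ l.erase (a, x'), p.2 ∈ S := fun p hp =>
      (hl p (List.erase_subset hp)).resolve_left (List.map_ne_of_mem_erase Prod.snd hnd hq hp)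
    rw [H.listComb_perm hperm] at hz
    by_cases ha : a = K.zero
    · subst ha
      rw [H.listComb_cons, H.zero_smul, H.vzero_setVadd] at hz
      have hrest0 := hS _ hrest (hnd.sublist (List.erase_sublist.map _)) hz
      intro p hp
      rcases List.mem_cons.1 (hperm.subset hp) with rfl | hp
      · rfl
      · exact hrest0 p hp
    · exact absurd (H.mem_HLSet_of_vzero_mem_listComb_cons hsld ha hrest hz) hx
  · exact hS l (fun p hp => (hl p hp).resolve_left fun h => hxl (h ▸ List.mem_map_of_mem hp))
      hnd hz

end Independence

section Dimension

theorem exists_exchange (hsld : H.StronglyLeftDistrib) {S T : Set V} (hS : H.LinIndepSet S)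
    {x : V} (hxS : x ∈ S) (hxT : x ∉ T) (hx : x ∈ H.HLSet T) :
    ∃ t ∈ T, t ∉ S ∧ T ⊆ H.HLSet (insert x (T \ {t})) := by
  classical
  obtain ⟨l₀, hl₀, hx₀⟩ := H.mem_HLSet.1 hx
  obtain ⟨l₁, hl₁, hnd₁, hx₁⟩ := H.exists_nodup_listComb hsld hl₀ hx₀
  obtain ⟨l, hsub, hne, hxl⟩ := H.exists_sublist_ne_zero hx₁
  have hlT : ∀ p ∈ l, p.2 ∈ T := fun p hp => hl₁ p (hsub.subset hp)
  have hnd : (l.map Prod.snd).Nodup := hnd₁.sublist (hsub.map _)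
  obtain ⟨⟨a, t⟩, hq, htS⟩ : ∃ q ∈ l, q.2 ∉ S := by
    by_contra! hall
    refine H.notMem_HLSet_diff_singleton hsld hS hxS (H.mem_HLSet.2 ⟨l, fun p hp => ?_, hxl⟩)
    exact ⟨hall p hp, fun hpx => hxT (Set.mem_singleton_iff.1 hpx ▸ hlT p hp)⟩
  -- `0 ∈ a∗t # (-1)∗x # (the rest of l)`, which can be solved for `t` since `a ≠ 0`
  have hz : H.vzero ∈ H.listComb ((a, t) :: (K.neg K.one, x) :: l.erase (a, t)) := by
    rw [← H.listComb_perm (((List.perm_cons_erase hq).cons _).trans (List.Perm.swap _ _ _)),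
      H.listComb_cons]
    exact H.mem_setVadd.2 ⟨_, H.vneg_mem_smul_neg_one hsld x, x, hxl, (H.vneg_spec x).2⟩
  have ht : t ∈ H.HLSet (insert x (T \ {t})) := by
    refine H.mem_HLSet_of_vzero_mem_listComb_cons hsld (hne _ hq) ?_ hz
    refine List.forall_mem_cons.2 ⟨Set.mem_insert x _, fun p hp => Set.mem_insert_of_mem x ?_⟩
    exact ⟨hlT p (List.erase_subset hp), List.map_ne_of_mem_erase Prod.snd hnd hq hp⟩
  refine ⟨t, hlT _ hq, htS, fun s hs => ?_⟩
  by_cases hst : s = t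
  · exact hst ▸ ht
  · exact H.subset_HLSet _ (Set.mem_insert_of_mem x ⟨hs, hst⟩)

theorem ncard_le_ncard_of_subset_HLSet (hsld : H.StronglyLeftDistrib) {S T : Set V}
    (hSfin : S.Finite) (hTfin : T.Finite) (hS : H.LinIndepSet S) (hST : S ⊆ H.HLSet T) :
    S.ncard ≤ T.ncard := by
  obtain ⟨n, hn⟩ : ∃ n, (S \ T).ncard = n := ⟨_, rfl⟩
  induction n using Nat.strong_induction_on generalizing T with
  | _ n ih =>
  rcases (S \ T).eq_empty_or_nonempty with hempty | ⟨x, hxS, hxT⟩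
  · exact Set.ncard_le_ncard (Set.sdiff_eq_empty.1 hempty) hTfin
  obtain ⟨t, htT, htS, hT⟩ := H.exists_exchange hsld hS hxS hxT (hST hxS)
  have hST' : S ⊆ H.HLSet (insert x (T \ {t})) :=
    hST.trans (H.HLSet_subset (H.isHypersubspace_HLSet hsld _) hT)
  have hdiff : S \ insert x (T \ {t}) ⊆ (S \ T) \ {x} := by
    rintro s ⟨hs, hsT'⟩
    refine ⟨⟨hs, fun hsT => hsT' (Set.mem_insert_of_mem x ⟨hsT, ?_⟩)⟩,
      fun hsx => hsT' (Set.mem_insert_iff.2 (Or.inl hsx))⟩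
    rintro rfl
    exact htS hs
  have hlt : (S \ insert x (T \ {t})).ncard < n :=
    calc _ ≤ ((S \ T) \ {x}).ncard := Set.ncard_le_ncard hdiff hSfin.sdiff.sdiff
      _ < (S \ T).ncard := Set.ncard_sdiff_singleton_lt_of_mem ⟨hxS, hxT⟩ hSfin.sdiff
      _ = n := hn
  calc S.ncard ≤ (insert x (T \ {t})).ncard := ih _ hlt (hTfin.sdiff.insert x) hST' rfl
    _ ≤ (T \ {t}).ncard + 1 := Set.ncard_insert_le _ _
    _ = T.ncard := Set.ncard_sdiff_singleton_add_one htT hTfin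

theorem ncard_eq_of_isBasisOf (hsld : H.StronglyLeftDistrib) {B B' X : Set V} (hBfin : B.Finite)
    (hB'fin : B'.Finite) (hB : H.IsBasisOf B X) (hB' : H.IsBasisOf B' X) :
    B.ncard = B'.ncard :=
  le_antisymm
    (H.ncard_le_ncard_of_subset_HLSet hsld hBfin hB'fin hB.2.1 (hB.1.trans hB'.2.2))
    (H.ncard_le_ncard_of_subset_HLSet hsld hB'fin hBfin hB'.2.1 (hB'.1.trans hB.2.2))

theorem exists_isBasisOf_superset (hsld : H.StronglyLeftDistrib) {X T C : Set V}
    (hXT : X ⊆ H.HLSet T) (hTfin : T.Finite) (hCfin : C.Finite) (hC : H.LinIndepSet C)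
    (hCX : C ⊆ X) : ∃ B, C ⊆ B ∧ B.Finite ∧ H.IsBasisOf B X := by
  obtain ⟨n, hn⟩ : ∃ n, T.ncard - C.ncard = n := ⟨_, rfl⟩
  induction n using Nat.strong_induction_on generalizing C with
  | _ n ih =>
  by_cases hX : X ⊆ H.HLSet C
  · exact ⟨C, subset_rfl, hCfin, hCX, hC, hX⟩
  obtain ⟨x, hxX, hxC⟩ := Set.not_subset.1 hX
  have hC' := H.linIndepSet_insert hsld hC hxC
  have hcard := Set.ncard_insert_of_notMem (fun h => hxC (H.subset_HLSet C h)) hCfin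
  -- independent sets inside `HLSet T` have at most `T.ncard` elements, so this terminates
  have hle := H.ncard_le_ncard_of_subset_HLSet hsld (hCfin.insert x) hTfin hC'
    (Set.insert_subset (hXT hxX) (hCX.trans hXT))
  obtain ⟨B, hCB, hB⟩ :=
    ih _ (by omega) (hCfin.insert x) hC' (Set.insert_subset hxX hCX) rfl
  exact ⟨B, (Set.subset_insert x C).trans hCB, hB⟩

end Dimension

section Sum

theorem subset_setVadd_left {U W : Set V} (hW : H.vzero ∈ W) : U ⊆ H.setVadd U W :=
  fun x hx => H.vadd_subset_setVadd hx hW (by rw [H.vadd_vzero]; rfl)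

theorem subset_setVadd_right {U W : Set V} (hU : H.vzero ∈ U) : W ⊆ H.setVadd U W := by
  rw [H.setVadd_comm]
  exact H.subset_setVadd_left hU

theorem listComb_eq_setVadd_filter (P : F × V → Bool) (l : List (F × V)) :
    H.listComb l =
      H.setVadd (H.listComb (l.filter P)) (H.listComb (l.filter fun p => !P p)) := by
  rw [← H.listComb_append, H.listComb_perm (List.filter_append_perm P l)]

theorem setVadd_eq_HLSet_union {U W : Set V} (hU : H.IsHypersubspace U)
    (hW : H.IsHypersubspace W) : H.setVadd U W = H.HLSet (U ∪ W) := by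
  classical
  apply Set.Subset.antisymm
  · intro x hx
    obtain ⟨u, hu, w, hw, hx⟩ := H.mem_setVadd.1 hx
    exact H.vadd_subset_HLSet (H.subset_HLSet _ (Or.inl hu)) (H.subset_HLSet _ (Or.inr hw)) hx
  · intro x hx
    obtain ⟨l, hl, hx⟩ := H.mem_HLSet.1 hx
    rw [H.listComb_eq_setVadd_filter (fun p => decide (p.2 ∈ U))] at hx
    refine H.setVadd_mono (H.listComb_subset hU fun p hp => ?_)
      (H.listComb_subset hW fun p hp => ?_) hx
    · simpa using (List.mem_filter.1 hp).2
    · obtain ⟨hp, hpU⟩ := List.mem_filter.1 hp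
      simpa using (hl p hp).resolve_left (by simpa using hpU)

theorem coeff_eq_zero_of_listComb_mem_HLSet (hsld : H.StronglyLeftDistrib) {B BI : Set V}
    (hB : H.LinIndepSet B) (hBI : BI ⊆ B) {l : List (F × V)} (hl : ∀ p ∈ l, p.2 ∈ B \ BI)
    (hnd : (l.map Prod.snd).Nodup) {w : V} (hw : w ∈ H.listComb l) (hwI : w ∈ H.HLSet BI) :
    ∀ p ∈ l, p.1 = K.zero := by
  obtain ⟨m₀, hm₀, hwm₀⟩ := H.mem_HLSet.1 hwI
  obtain ⟨m, hm, hmnd, hwm⟩ := H.exists_nodup_listComb hsld hm₀ hwm₀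
  set m' := m.map fun p => (K.mul (K.neg K.one) p.1, p.2)
  have hz : H.vzero ∈ H.listComb (m' ++ l) := by
    rw [H.listComb_append]
    exact H.mem_setVadd.2 ⟨_, H.vneg_mem_listComb_map hsld hwm, w, hw, (H.vneg_spec w).2⟩
  have hsnd : m'.map Prod.snd = m.map Prod.snd := by
    simp only [m', List.map_map, Function.comp_def]
  refine fun p hp => H.linIndepSet_iff.1 hB (m' ++ l) ?_ ?_ hz p (List.mem_append_right _ hp)
  · exact List.forall_mem_append.2
      ⟨List.forall_mem_map.2 fun p hp => hBI (hm p hp), fun p hp => (hl p hp).1⟩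
  · rw [List.map_append, hsnd]
    refine hmnd.append hnd fun y hym hyl => ?_
    obtain ⟨p, hp, rfl⟩ := List.mem_map.1 hym
    obtain ⟨q, hq, hqp⟩ := List.mem_map.1 hyl
    exact (hl q hq).2 (hqp ▸ hm p hp)

theorem linIndepSet_union (hsld : H.StronglyLeftDistrib) {U W B₁ B₂ BI : Set V}
    (hU : H.IsHypersubspace U) (hW : H.IsHypersubspace W) (hB₁ : H.IsBasisOf B₁ U)
    (hB₂ : H.IsBasisOf B₂ W) (hBI : U ∩ W ⊆ H.HLSet BI) (hBI₁ : BI ⊆ B₁) (hBI₂ : BI ⊆ B₂) :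
    H.LinIndepSet (B₁ ∪ B₂) := by
  classical
  rw [linIndepSet_iff]
  intro l hl hnd hz
  set l₁ := l.filter fun p => decide (p.2 ∈ B₁)
  set l₂ := l.filter fun p => !decide (p.2 ∈ B₁)
  have hl₁ : ∀ p ∈ l₁, p.2 ∈ B₁ := fun p hp => by simpa using (List.mem_filter.1 hp).2
  have hl₂ : ∀ p ∈ l₂, p.2 ∈ B₂ \ BI := fun p hp => by
    obtain ⟨hp, hpB₁⟩ := List.mem_filter.1 hp
    simp only [Bool.not_eq_true', decide_eq_false_iff_not] at hpB₁
    exact ⟨(hl p hp).resolve_left hpB₁, fun h => hpB₁ (hBI₁ h)⟩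
  rw [H.listComb_eq_setVadd_filter (fun p => decide (p.2 ∈ B₁))] at hz
  obtain ⟨u, hu, w, hw, huw⟩ := H.mem_setVadd.1 hz
  have huU : u ∈ U := H.listComb_subset hU (fun p hp => hB₁.1 (hl₁ p hp)) hu
  have hwI : w ∈ U ∩ W := by
    refine ⟨?_, H.listComb_subset hW (fun p hp => hB₂.1 (hl₂ p hp).1) hw⟩
    rw [H.eq_vneg huw]
    exact hU.2.2.2 u huU
  -- the `B₂`-part lies in `U ∩ W`, hence in the span of `BI`, so it vanishes
  have hzero₂ := H.coeff_eq_zero_of_listComb_mem_HLSet hsld hB₂.2.1 hBI₂ hl₂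
    (hnd.sublist (List.filter_sublist.map _)) hw (hBI hwI)
  rw [H.listComb_eq_vzero hzero₂, Set.mem_singleton_iff] at hw
  rw [hw, H.vadd_vzero, Set.mem_singleton_iff] at huw
  have hzero₁ := H.linIndepSet_iff.1 hB₁.2.1 l₁ hl₁ (hnd.sublist (List.filter_sublist.map _))
    (huw ▸ hu)
  intro p hp
  by_cases hpB₁ : p.2 ∈ B₁
  · exact hzero₁ p (List.mem_filter.2 ⟨hp, by simpa using hpB₁⟩)
  · exact hzero₂ p (List.mem_filter.2 ⟨hp, by simpa using hpB₁⟩)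

theorem isBasisOf_setVadd_union (hsld : H.StronglyLeftDistrib) {U W B₁ B₂ BI : Set V}
    (hU : H.IsHypersubspace U) (hW : H.IsHypersubspace W) (hB₁ : H.IsBasisOf B₁ U)
    (hB₂ : H.IsBasisOf B₂ W) (hBI : U ∩ W ⊆ H.HLSet BI) (hBI₁ : BI ⊆ B₁) (hBI₂ : BI ⊆ B₂) :
    H.IsBasisOf (B₁ ∪ B₂) (H.setVadd U W) := by
  refine ⟨Set.union_subset (hB₁.1.trans (H.subset_setVadd_left hW.2.2.1))
      (hB₂.1.trans (H.subset_setVadd_right hU.2.2.1)),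
    H.linIndepSet_union hsld hU hW hB₁ hB₂ hBI hBI₁ hBI₂, fun x hx => ?_⟩
  obtain ⟨u, hu, w, hw, hx⟩ := H.mem_setVadd.1 hx
  exact H.vadd_subset_HLSet (H.HLSet_mono Set.subset_union_left (hB₁.2.2 hu))
    (H.HLSet_mono Set.subset_union_right (hB₂.2.2 hw)) hx

theorem inter_eq_of_inter_subset_HLSet (hsld : H.StronglyLeftDistrib) {U W B₁ B₂ BI : Set V}
    (hB₁ : H.IsBasisOf B₁ U) (hB₂ : H.IsBasisOf B₂ W) (hBI : U ∩ W ⊆ H.HLSet BI)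
    (hBI₁ : BI ⊆ B₁) (hBI₂ : BI ⊆ B₂) : B₁ ∩ B₂ = BI := by
  refine Set.Subset.antisymm (fun x hx => ?_) (Set.subset_inter hBI₁ hBI₂)
  by_contra hxBI
  refine H.notMem_HLSet_diff_singleton hsld hB₁.2.1 hx.1
    (H.HLSet_mono ?_ (hBI ⟨hB₁.1 hx.1, hB₂.1 hx.2⟩))
  exact fun b hb => ⟨hBI₁ hb, fun hbx => hxBI (Set.mem_singleton_iff.1 hbx ▸ hb)⟩

end Sum

end HypervectorSpace

/-- Dimension theorem: if `U` and `W` are finite-dimensional hypersubspaces of a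
strongly left distributive hypervector space `V`, then `U # W` is a
finite-dimensional hypersubspace of `V` and
`dim(U # W) = dim(U) + dim(W) − dim(U ∩ W)`, i.e. there are finite bases `B` of
`U # W` and `BI` of `U ∩ W` with `|B| + |BI| = |BU| + |BW|`. -/
theorem HypervectorSpace.dimension_theorem {F : Type u} {V : Type v}
    {K : Hyperfield F} (H : HypervectorSpace F V K)
    (hsld : H.StronglyLeftDistrib) (U W : Set V)
    (hU : H.IsHypersubspace U) (hW : H.IsHypersubspace W)
    (BU : Set V) (hBUfin : BU.Finite) (hBU : H.IsBasisOf BU U)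
    (BW : Set V) (hBWfin : BW.Finite) (hBW : H.IsBasisOf BW W) :
    H.IsHypersubspace (H.setVadd U W) ∧
      ∃ B BI : Set V, B.Finite ∧ BI.Finite ∧
        H.IsBasisOf B (H.setVadd U W) ∧ H.IsBasisOf BI (U ∩ W) ∧
        B.ncard + BI.ncard = BU.ncard + BW.ncard := by
  obtain ⟨BI, -, hBIfin, hBI⟩ := H.exists_isBasisOf_superset hsld
    (Set.inter_subset_left.trans hBU.2.2) hBUfin Set.finite_empty H.linIndepSet_empty
    (Set.empty_subset _)
  obtain ⟨B₁, hBI₁, hB₁fin, hB₁⟩ := H.exists_isBasisOf_superset hsld hBU.2.2 hBUfin hBIfin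
    hBI.2.1 (hBI.1.trans Set.inter_subset_left)
  obtain ⟨B₂, hBI₂, hB₂fin, hB₂⟩ := H.exists_isBasisOf_superset hsld hBW.2.2 hBWfin hBIfin
    hBI.2.1 (hBI.1.trans Set.inter_subset_right)
  refine ⟨H.setVadd_eq_HLSet_union hU hW ▸ H.isHypersubspace_HLSet hsld _,
    B₁ ∪ B₂, BI, hB₁fin.union hB₂fin, hBIfin,
    H.isBasisOf_setVadd_union hsld hU hW hB₁ hB₂ hBI.2.2 hBI₁ hBI₂, hBI, ?_⟩
  rw [← H.inter_eq_of_inter_subset_HLSet hsld hB₁ hB₂ hBI.2.2 hBI₁ hBI₂,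
    Set.ncard_union_add_ncard_inter _ _ hB₁fin hB₂fin,
    H.ncard_eq_of_isBasisOf hsld hB₁fin hBUfin hB₁ hBU,
    H.ncard_eq_of_isBasisOf hsld hB₂fin hBWfin hB₂ hBW]
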